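/- If every route in a solution of the vehicle routing master problem is TSP-optimal, then for every TSP-violating path P the solution satisfies the TSP-optimality cut: the sum over arcs a ∈ A(P) of the total flow x_a = Σ_{r : a ∈ r} x_r is at most |A(P)| - 1, where x_r ∈ {0,1} indicates whether route r is selected and routes are arc-disjoint in the sense that each customer is visited exactly once. -/

import Mathlib

variable {V : Type*}

/-- The list of arcs (consecutive node pairs) of a node list. -/
def arcsOf (l : List V) : List (V × V) := l.zip l.tail

/-- The length of a path given as a node list: the sum of its arc distances. -/
def plen (d : V → V → ℝ) (l : List V) : ℝ :=
  ((arcsOf l).map (fun a => d a.1 a.2)).sum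

/-- A path is TSP-violating if some path on the same node set with
the same endpoints is strictly shorter. -/
def TSPviolating (d : V → V → ℝ) (P : List V) : Prop :=
  ∃ Q : List V, Q.Perm P ∧ Q.head? = P.head? ∧ Q.getLast? = P.getLast? ∧
    plen d Q < plen d P

/-- Length of the route visiting customers `c` in order,
starting and ending at the depot. -/
def routeLen (d : V → V → ℝ) (depot : V) (c : List V) : ℝ :=
  plen d (depot :: c ++ [depot])

/-- A route (given by its ordered customer list) is TSP-optimal:
no reordering of its customers gives a strictly shorter route. -/
def TSPopt (d : V → V → ℝ) (depot : V) (c : List V) : Prop :=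
  ∀ c' : List V, c'.Perm c → routeLen d depot c ≤ routeLen d depot c'

/-- Arc flow of a set of selected routes: the number of selected routes using arc `a`. -/
def flow [DecidableEq V] (depot : V) (routes : List (List V)) (a : V × V) : ℤ :=
  (routes.map (fun c => ((arcsOf (depot :: c ++ [depot])).count a : ℤ))).sum

/-! If the cut failed, every arc of `P` would carry flow exactly one: the flow on an arc between
distinct nodes is at most the number of visits to a customer endpoint, which is one. Consecutive
arcs of `P` share an inner customer, and a customer lies on a unique route, so all arcs of `P` lie
on one route; as the route is simple, `P` is a contiguous segment of it. Replacing that segment by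
the shorter reordering witnessing the violation yields a shorter route on the same customers,
contradicting TSP-optimality. -/

@[simp] lemma arcsOf_cons_cons (a b : V) (l : List V) :
    arcsOf (a :: b :: l) = (a, b) :: arcsOf (b :: l) := rfl

lemma mem_arcsOf_iff {l : List V} {a : V × V} : a ∈ arcsOf l ↔ [a.1, a.2] <:+: l := by
  induction l with
  | nil => simp [arcsOf]
  | cons u l ih =>
    cases l with
    | nil => simpa [arcsOf] using fun h : [a.1, a.2] <:+: [u] => by simpa using h.length_le
    | cons v l =>
      rw [arcsOf_cons_cons, List.mem_cons, ih, List.infix_cons_iff (a := u)]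
      simp [Prod.ext_iff]

lemma map_fst_arcsOf : ∀ l : List V, (arcsOf l).map Prod.fst = l.dropLast
  | [] => rfl
  | [_] => rfl
  | a :: b :: l => by simp [map_fst_arcsOf (b :: l)]

lemma map_snd_arcsOf (l : List V) : (arcsOf l).map Prod.snd = l.tail :=
  List.map_snd_zip (by simp)

lemma count_arcsOf_le_count_dropLast [DecidableEq V] (l : List V) (a : V × V) :
    (arcsOf l).count a ≤ l.dropLast.count a.1 :=
  map_fst_arcsOf l ▸ List.count_le_count_map

lemma count_arcsOf_le_count_tail [DecidableEq V] (l : List V) (a : V × V) :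
    (arcsOf l).count a ≤ l.tail.count a.2 :=
  map_snd_arcsOf l ▸ List.count_le_count_map

lemma ne_of_mem_arcsOf {l : List V} (hl : l.Nodup) {a : V × V} (ha : a ∈ arcsOf l) :
    a.1 ≠ a.2 := by
  simpa using (mem_arcsOf_iff.1 ha).sublist.nodup hl

lemma eq_of_mem_arcsOf_of_nodup_tail {l : List V} (hl : l.tail.Nodup) {x w y : V}
    (hx : (x, y) ∈ arcsOf l) (hw : (w, y) ∈ arcsOf l) : x = w := by
  rw [← map_snd_arcsOf] at hl
  exact congrArg Prod.fst (List.inj_on_of_nodup_map hl hx hw rfl)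

lemma cons_infix_of_mem_arcsOf {l r : List V} {x y : V} (hl : l.tail.Nodup)
    (hy : l.head? ≠ some y) (hxy : (x, y) ∈ arcsOf l) (h : y :: r <:+: l) :
    x :: y :: r <:+: l := by
  obtain ⟨pre, suf, rfl⟩ := h
  obtain rfl | ⟨pre, w, rfl⟩ := pre.eq_nil_or_concat'
  · simp at hy
  have hwy : (w, y) ∈ arcsOf (pre ++ [w] ++ y :: r ++ suf) :=
    mem_arcsOf_iff.2 ⟨pre, r ++ suf, by simp⟩
  obtain rfl := eq_of_mem_arcsOf_of_nodup_tail hl hxy hwy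
  exact ⟨pre, suf, by simp⟩

section Length

variable (d : V → V → ℝ)

def joinLen (X Y : List V) : ℝ :=
  match X.getLast?, Y.head? with
  | some a, some b => d a b
  | _, _ => 0

lemma plen_cons_cons (a b : V) (l : List V) : plen d (a :: b :: l) = d a b + plen d (b :: l) := by
  simp [plen]

lemma plen_append (X Y : List V) : plen d (X ++ Y) = plen d X + joinLen d X Y + plen d Y := by
  induction X with
  | nil => simp [joinLen, plen, arcsOf]
  | cons a X ih =>
    cases X with
    | nil => cases Y <;> simp [joinLen, plen, arcsOf]
    | cons b X =>
      rw [List.cons_append, List.cons_append, plen_cons_cons, ← List.cons_append, ih,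
        plen_cons_cons]
      simp only [joinLen, List.getLast?_cons_cons]
      ring

lemma plen_splice_lt {P Q : List V} (hhead : Q.head? = P.head?) (hlast : Q.getLast? = P.getLast?)
    (hlt : plen d Q < plen d P) (pre suf : List V) :
    plen d (pre ++ Q ++ suf) < plen d (pre ++ P ++ suf) := by
  have hjoin_pre : joinLen d pre (Q ++ suf) = joinLen d pre (P ++ suf) := by
    simp [joinLen, List.head?_append, hhead]
  have hjoin_suf : joinLen d Q suf = joinLen d P suf := by simp [joinLen, hlast]
  simp only [List.append_assoc, plen_append, hjoin_pre, hjoin_suf]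
  linarith

end Length

lemma TSPviolating.exists_eq_cons_cons {d : V → V → ℝ} {P : List V} (h : TSPviolating d P) :
    ∃ x y t, P = x :: y :: t := by
  obtain ⟨Q, hperm, -, -, hlt⟩ := h
  match P, hperm with
  | [], hperm => simp [List.perm_nil.1 hperm] at hlt
  | [x], hperm => simp [hperm.eq_singleton] at hlt
  | x :: y :: t, _ => exact ⟨x, y, t, rfl⟩

lemma forall_one_le_of_length_le_sum {α : Type*} [DecidableEq α] {L : List α} {f : α → ℤ}
    (hle : ∀ a ∈ L, f a ≤ 1) (hsum : (L.length : ℤ) ≤ (L.map f).sum) : ∀ a ∈ L, 1 ≤ f a := by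
  intro a ha
  have hrest : ((L.erase a).map f).sum ≤ (L.erase a).length := by
    simpa using List.sum_le_card_nsmul ((L.erase a).map f) 1 (by
      simp only [List.mem_map]
      rintro _ ⟨b, hb, rfl⟩
      exact hle b (List.mem_of_mem_erase hb))
  have hlen : ((L.erase a).length : ℤ) = L.length - 1 := by
    rw [List.length_erase_of_mem ha]
    have := List.length_pos_of_mem ha
    omega
  have := List.sum_map_erase f ha
  omega

lemma exists_eq_cons_append_singleton {l : List V} {a b : V} (hlen : 2 ≤ l.length)
    (hhead : l.head? = some a) (hlast : l.getLast? = some b) : ∃ m, l = a :: m ++ [b] := by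
  obtain ⟨l, rfl⟩ := List.head?_eq_some_iff.1 hhead
  have hl : l ≠ [] := by rintro rfl; simp at hlen
  rw [List.getLast?_cons_of_ne_nil hl] at hlast
  obtain ⟨m, rfl⟩ := List.getLast?_eq_some_iff.1 hlast
  exact ⟨m, rfl⟩

lemma mem_of_mem_route_of_ne {depot : V} {c : List V} {v : V} (hv : v ≠ depot)
    (h : v ∈ depot :: c ++ [depot]) : v ∈ c := by
  simpa [hv] using h

section Routes

variable [DecidableEq V] {depot : V} {routes : List (List V)}

lemma count_arcsOf_route_le (c : List V) {a : V × V} {w : V} (hw : w ≠ depot)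
    (hwa : w = a.1 ∨ w = a.2) : (arcsOf (depot :: c ++ [depot])).count a ≤ c.count w := by
  rcases hwa with rfl | rfl
  · have := count_arcsOf_le_count_dropLast (depot :: c ++ [depot]) a
    rw [List.dropLast_concat] at this
    simpa [List.count_cons, hw.symm] using this
  · simpa [List.count_cons, hw.symm] using count_arcsOf_le_count_tail (depot :: c ++ [depot]) a

lemma flow_le_one
    (hcover : ∀ v : V, v ≠ depot → (routes.map (fun c => (c.count v : ℤ))).sum = 1)
    {a : V × V} (ha : a.1 ≠ a.2) : flow depot routes a ≤ 1 := by
  obtain ⟨w, hwa, hw⟩ : ∃ w, (w = a.1 ∨ w = a.2) ∧ w ≠ depot := by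
    by_cases h : a.1 = depot
    · exact ⟨a.2, .inr rfl, h ▸ ha.symm⟩
    · exact ⟨a.1, .inl rfl, h⟩
  rw [← hcover w hw, flow]
  exact List.sum_le_sum fun c _ => by exact_mod_cast count_arcsOf_route_le c hw hwa

lemma exists_mem_arcsOf_of_flow_pos {a : V × V} (h : 0 < flow depot routes a) :
    ∃ c ∈ routes, a ∈ arcsOf (depot :: c ++ [depot]) := by
  by_contra! hnone
  refine h.ne' (List.sum_eq_zero ?_)
  simp only [List.mem_map]
  rintro _ ⟨c, hc, rfl⟩
  exact_mod_cast List.count_eq_zero_of_not_mem (hnone c hc)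

lemma eq_of_mem_routes
    (hcover : ∀ v : V, v ≠ depot → (routes.map (fun c => (c.count v : ℤ))).sum = 1)
    {v : V} (hv : v ≠ depot) {c₁ c₂ : List V} (hc₁ : c₁ ∈ routes) (hc₂ : c₂ ∈ routes)
    (hv₁ : v ∈ c₁) (hv₂ : v ∈ c₂) : c₁ = c₂ := by
  by_contra hne
  obtain ⟨rest, hperm⟩ : ∃ rest, routes.Perm (c₁ :: rest) := ⟨_, List.perm_cons_erase hc₁⟩
  have hc₂ : c₂ ∈ rest := by simpa [Ne.symm hne] using hperm.subset hc₂
  have hsum := hcover v hv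
  rw [(hperm.map _).sum_eq, List.map_cons, List.sum_cons] at hsum
  have hrest := List.single_le_sum (by simp) _ (List.mem_map_of_mem (f := fun c : List V =>
    (c.count v : ℤ)) hc₂)
  have h₁ : (1 : ℤ) ≤ c₁.count v := by exact_mod_cast List.count_pos_iff.2 hv₁
  have h₂ : (1 : ℤ) ≤ c₂.count v := by exact_mod_cast List.count_pos_iff.2 hv₂
  linarith

lemma exists_route_infix
    (hnd : ∀ c ∈ routes, c.Nodup) (hdep : ∀ c ∈ routes, depot ∉ c)
    (hcover : ∀ v : V, v ≠ depot → (routes.map (fun c => (c.count v : ℤ))).sum = 1)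
    (t : List V) (x y : V)
    (harcs : ∀ a ∈ arcsOf (x :: y :: t), ∃ c ∈ routes, a ∈ arcsOf (depot :: c ++ [depot]))
    (hinner : depot ∉ (y :: t).dropLast) :
    ∃ c ∈ routes, x :: y :: t <:+: depot :: c ++ [depot] := by
  induction t generalizing x y with
  | nil =>
    obtain ⟨c, hc, hxy⟩ := harcs (x, y) (by simp)
    exact ⟨c, hc, mem_arcsOf_iff.1 hxy⟩
  | cons z t ih =>
    have hy : y ≠ depot := by rintro rfl; simp at hinner
    obtain ⟨c, hc, hinfix⟩ := ih y z (fun a ha => harcs a (List.mem_cons_of_mem _ ha)) (by simp_all)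
    obtain ⟨c', hc', hxy⟩ := harcs (x, y) (by simp)
    have hyc : y ∈ c := mem_of_mem_route_of_ne hy (hinfix.subset (by simp))
    have hyc' : y ∈ c' := mem_of_mem_route_of_ne hy ((mem_arcsOf_iff.1 hxy).subset (by simp))
    obtain rfl := eq_of_mem_routes hcover hy hc' hc hyc' hyc
    refine ⟨c', hc', cons_infix_of_mem_arcsOf ?_ (by simpa using hy.symm) hxy hinfix⟩
    simpa [List.nodup_append, hnd c' hc'] using fun a ha (h : a = depot) => hdep c' hc' (h ▸ ha)

end Routes

lemma exists_perm_of_splice {depot : V} {c P Q pre suf : List V}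
    (hroute : pre ++ P ++ suf = depot :: c ++ [depot]) (hperm : Q.Perm P)
    (hhead : Q.head? = P.head?) (hlast : Q.getLast? = P.getLast?) :
    ∃ c', c'.Perm c ∧ pre ++ Q ++ suf = depot :: c' ++ [depot] := by
  have hperm' : (pre ++ Q ++ suf).Perm (depot :: c ++ [depot]) :=
    hroute ▸ (hperm.append_left pre).append_right suf
  have hhead' : (pre ++ Q ++ suf).head? = some depot := by
    change _ = (depot :: c ++ [depot]).head?
    rw [← hroute]
    simp [List.head?_append, hhead]
  have hlast' : (pre ++ Q ++ suf).getLast? = some depot := by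
    rw [← List.getLast?_concat (a := depot) (l := depot :: c), ← hroute]
    simp [List.getLast?_append, hlast]
  obtain ⟨c', hc'⟩ := exists_eq_cons_append_singleton (by rw [hperm'.length_eq]; simp)
    hhead' hlast'
  exact ⟨c', by simpa [hc', List.perm_append_right_iff] using hperm', hc'⟩

theorem tsp_optimality_cut_valid_general [DecidableEq V]
    (d : V → V → ℝ) (depot : V) (routes : List (List V))
    (hnd : ∀ c ∈ routes, c.Nodup) (hdep : ∀ c ∈ routes, depot ∉ c)
    (hcover : ∀ v : V, v ≠ depot → (routes.map (fun c => (c.count v : ℤ))).sum = 1)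
    (hsel : ∀ c ∈ routes, TSPopt d depot c)
    (P : List V) (hPnd : P.Nodup) (hPdep : depot ∉ (P.drop 1).dropLast)
    (hviol : TSPviolating d P) :
    ((arcsOf P).map (flow depot routes)).sum ≤ ((arcsOf P).length : ℤ) - 1 := by
  obtain ⟨x, y, t, rfl⟩ := hviol.exists_eq_cons_cons
  obtain ⟨Q, hperm, hhead, hlast, hlt⟩ := hviol
  by_contra! hcut
  have hflow : ∀ a ∈ arcsOf (x :: y :: t), 1 ≤ flow depot routes a :=
    forall_one_le_of_length_le_sum (fun a ha => flow_le_one hcover (ne_of_mem_arcsOf hPnd ha))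
      (by omega)
  obtain ⟨c, hc, pre, suf, hroute⟩ := exists_route_infix hnd hdep hcover t x y
    (fun a ha => exists_mem_arcsOf_of_flow_pos (zero_lt_one.trans_le (hflow a ha)))
    (by simpa using hPdep)
  obtain ⟨c', hc', hroute'⟩ := exists_perm_of_splice hroute hperm hhead hlast
  have hopt := hsel c hc c' hc'
  rw [routeLen, routeLen, ← hroute, ← hroute'] at hopt
  exact hopt.not_gt (plen_splice_lt d hhead hlast hlt pre suf)

/-- if every route of a solution covering each customer exactly once is
TSP-optimal, then for every TSP-violating path `P` (with no depot as intermediate node)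
the TSP-optimality cut `∑_{a ∈ A(P)} x_a ≤ |A(P)| - 1` holds. -/
theorem tsp_optimality_cut_valid [DecidableEq V]
    (d : V → V → ℝ) (depot : V) (routes : List (List V))
    (hnd : ∀ c ∈ routes, c.Nodup) (hdep : ∀ c ∈ routes, depot ∉ c)
    (hne : ∀ c ∈ routes, c ≠ [])
    (hcover : ∀ v : V, v ≠ depot → (routes.map (fun c => (c.count v : ℤ))).sum = 1)
    (hsel : ∀ c ∈ routes, TSPopt d depot c)
    (P : List V) (hPnd : P.Nodup) (hPdep : depot ∉ (P.drop 1).dropLast)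
    (hviol : TSPviolating d P) :
    ((arcsOf P).map (flow depot routes)).sum ≤ ((arcsOf P).length : ℤ) - 1 :=
  tsp_optimality_cut_valid_general d depot routes hnd hdep hcover hsel P hPnd hPdep hviol
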